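/- Let R be a commutative local ring, n ≥ 1, and let s = Σ_{i=0}^{n−1} s_i x^i ∈ R[x]/(x^n). Then K_s(R[x]/(x^n)) is quasipolar if and only if K_{s₀}(R) is quasipolar. In particular, for all 1 ≤ m ≤ n, the ring K_{x^m}(R[x]/(x^n)) is quasipolar. -/

import Mathlib

/-- The generalized matrix ring `K_s(R)` with multiplier `s`. -/
@[ext]
structure GenMatrix (R : Type*) (s : R) where
  a : R
  b : R
  c : R
  d : R

namespace GenMatrix

variable {R : Type*} [Ring R] {s : R}

instance : Add (GenMatrix R s) :=
  ⟨fun X Y => ⟨X.a + Y.a, X.b + Y.b, X.c + Y.c, X.d + Y.d⟩⟩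
instance : Neg (GenMatrix R s) := ⟨fun X => ⟨-X.a, -X.b, -X.c, -X.d⟩⟩
instance : Zero (GenMatrix R s) := ⟨⟨0, 0, 0, 0⟩⟩
instance : One (GenMatrix R s) := ⟨⟨1, 0, 0, 1⟩⟩
instance : Mul (GenMatrix R s) :=
  ⟨fun X Y => ⟨X.a * Y.a + s * (X.b * Y.c), X.a * Y.b + X.b * Y.d,
    X.c * Y.a + X.d * Y.c, s * (X.c * Y.b) + X.d * Y.d⟩⟩

@[simp] lemma add_a (X Y : GenMatrix R s) : (X + Y).a = X.a + Y.a := rfl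
@[simp] lemma add_b (X Y : GenMatrix R s) : (X + Y).b = X.b + Y.b := rfl
@[simp] lemma add_c (X Y : GenMatrix R s) : (X + Y).c = X.c + Y.c := rfl
@[simp] lemma add_d (X Y : GenMatrix R s) : (X + Y).d = X.d + Y.d := rfl
@[simp] lemma neg_a (X : GenMatrix R s) : (-X).a = -X.a := rfl
@[simp] lemma neg_b (X : GenMatrix R s) : (-X).b = -X.b := rfl
@[simp] lemma neg_c (X : GenMatrix R s) : (-X).c = -X.c := rfl
@[simp] lemma neg_d (X : GenMatrix R s) : (-X).d = -X.d := rfl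
@[simp] lemma zero_a : (0 : GenMatrix R s).a = 0 := rfl
@[simp] lemma zero_b : (0 : GenMatrix R s).b = 0 := rfl
@[simp] lemma zero_c : (0 : GenMatrix R s).c = 0 := rfl
@[simp] lemma zero_d : (0 : GenMatrix R s).d = 0 := rfl
@[simp] lemma one_a : (1 : GenMatrix R s).a = 1 := rfl
@[simp] lemma one_b : (1 : GenMatrix R s).b = 0 := rfl
@[simp] lemma one_c : (1 : GenMatrix R s).c = 0 := rfl
@[simp] lemma one_d : (1 : GenMatrix R s).d = 1 := rfl
@[simp] lemma mul_a (X Y : GenMatrix R s) : (X * Y).a = X.a * Y.a + s * (X.b * Y.c) := rfl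
@[simp] lemma mul_b (X Y : GenMatrix R s) : (X * Y).b = X.a * Y.b + X.b * Y.d := rfl
@[simp] lemma mul_c (X Y : GenMatrix R s) : (X * Y).c = X.c * Y.a + X.d * Y.c := rfl
@[simp] lemma mul_d (X Y : GenMatrix R s) : (X * Y).d = s * (X.c * Y.b) + X.d * Y.d := rfl

instance : AddCommGroup (GenMatrix R s) where
  add_assoc X Y Z := by ext <;> simp [add_assoc]
  zero_add X := by ext <;> simp
  add_zero X := by ext <;> simp
  add_comm X Y := by ext <;> simp [add_comm]
  neg_add_cancel X := by ext <;> simp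
  nsmul := nsmulRec
  zsmul := zsmulRec

section Central

variable [Fact (s ∈ Set.center R)]

lemma scomm (r : R) : r * s = s * r := Semigroup.mem_center_iff.mp Fact.out r

lemma sshift (r t : R) : r * (s * t) = s * (r * t) := by
  rw [← mul_assoc, scomm (s := s), mul_assoc]

instance : Ring (GenMatrix R s) where
  __ := (inferInstance : AddCommGroup (GenMatrix R s))
  left_distrib X Y Z := by ext <;> simp [mul_add, add_mul] <;> abel
  right_distrib X Y Z := by ext <;> simp [mul_add, add_mul] <;> abel
  zero_mul X := by ext <;> simp
  mul_zero X := by ext <;> simp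
  mul_assoc X Y Z := by
    ext <;> simp only [mul_a, mul_b, mul_c, mul_d, mul_add, add_mul, mul_assoc, sshift] <;> abel
  one_mul X := by ext <;> simp
  mul_one X := by ext <;> simp

end Central

instance central_of_comm {R : Type*} [CommRing R] (s : R) : Fact (s ∈ Set.center R) :=
  ⟨by rw [Set.center_eq_univ]; trivial⟩

/-- `det_s` of a generalized matrix over a commutative ring. -/
def dets {R : Type*} {s : R} [CommRing R] (A : GenMatrix R s) : R :=
  A.a * A.d - s * (A.b * A.c)

/-- The trace of a generalized matrix. -/
def tr {R : Type*} {s : R} [Ring R] (A : GenMatrix R s) : R := A.a + A.d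

end GenMatrix

/-- An element `a` is quasinilpotent if `1 + a*x` is a unit for every `x` commuting with `a`. -/
def IsQuasinilpotent {R : Type*} [Ring R] (a : R) : Prop :=
  ∀ x : R, a * x = x * a → IsUnit (1 + a * x)

/-- An element `a` is quasipolar if there is an idempotent `p` in the double commutant of `a`
with `a + p` a unit and `a * p` quasinilpotent. -/
def IsQuasipolar {R : Type*} [Ring R] (a : R) : Prop :=
  ∃ p : R, IsIdempotentElem p ∧ (∀ y : R, y * a = a * y → p * y = y * p) ∧
    IsUnit (a + p) ∧ IsQuasinilpotent (a * p)

/-- A ring is quasipolar if every element is quasipolar. -/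
def IsQuasipolarRing (R : Type*) [Ring R] : Prop := ∀ a : R, IsQuasipolar a

/-- An element is strongly clean if it is the sum of an idempotent and a unit that commute. -/
def IsStronglyClean {R : Type*} [Ring R] (a : R) : Prop :=
  ∃ e u : R, IsIdempotentElem e ∧ IsUnit u ∧ a = e + u ∧ e * u = u * e

/-- A ring is strongly clean if every element is strongly clean. -/
def IsStronglyCleanRing (R : Type*) [Ring R] : Prop := ∀ a : R, IsStronglyClean a

/-- `a` is similar to `b` if `b = u⁻¹ * a * u` for some unit `u`. -/
def IsSimilar {R : Type*} [Ring R] (a b : R) : Prop :=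
  ∃ u : Rˣ, b = ↑u⁻¹ * a * ↑u

/-- The Jacobson radical of a ring: the intersection of all maximal left ideals. -/
def JacobsonRadical (R : Type*) [Ring R] : Ideal R := Ideal.jacobson ⊥

/-
Over a commutative local ring `S`, an element `A` of `K_s(S)` with `det_s A` a unit is quasipolar
via `p = 0`, and one with trace and determinant in the maximal ideal via `p = 1`: for `X`
commuting with `A` we have `(AX)² = A²X²`, which puts `tr (AX)²` and hence `tr (AX)` into the
maximal ideal. When `tr A` is a unit and `det_s A` is not, `A` is quasipolar iff its
characteristic polynomial `X² - tr A • X + det_s A` has a root `l` in the maximal ideal: such a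
root gives the spectral idempotent `p` of `A` for `l`, and conversely any witness `p` must be a
rank-one idempotent (`det_s p = 0`, `tr p = 1`), and then `tr (A p)` is such a root.
This root is simple, so Newton's method lifts it along `R[x]/(xⁿ) → R, f ↦ f(0)`, a surjection
with nil kernel; hence the criterion holds for `K_s(R[x]/(xⁿ))` iff it holds for `K_{s₀}(R)`.
For `s₀ = 0` it always holds, as `det_0 A = a d` then factors the characteristic polynomial.
-/

open Polynomial IsLocalRing

section LocalRing

variable {S : Type*} [CommRing S] [IsLocalRing S]

lemma IsLocalRing.isUnit_add_of_mem_maximalIdeal {u x : S} (hu : IsUnit u)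
    (hx : x ∈ maximalIdeal S) : IsUnit (u + x) :=
  notMem_maximalIdeal.mp fun h => notMem_maximalIdeal.mpr hu (by simpa using sub_mem h hx)

lemma IsLocalRing.eq_zero_or_eq_one_of_isIdempotentElem {e : S} (he : IsIdempotentElem e) :
    e = 0 ∨ e = 1 := by
  rcases isUnit_or_isUnit_one_sub_self e with h | h
  · exact Or.inr ((IsIdempotentElem.iff_eq_one_of_isUnit h).mp he)
  · exact Or.inl (sub_eq_self.mp ((IsIdempotentElem.iff_eq_one_of_isUnit h).mp he.one_sub))

end LocalRing

section NilKernel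

variable {S S' : Type*} [CommRing S] [CommRing S'] (φ : S →+* S')

lemma RingHom.isLocalHom_of_surjective_of_ker_le_nilradical (hφ : Function.Surjective φ)
    (hker : RingHom.ker φ ≤ nilradical S) : IsLocalHom φ where
  map_nonunit x hx := by
    obtain ⟨y', hy'⟩ := hx.exists_right_inv
    obtain ⟨y, rfl⟩ := hφ y'
    have hnil : IsNilpotent (x * y - 1) := hker (by simp [hy'])
    exact isUnit_of_mul_isUnit_left (by simpa using hnil.isUnit_add_one)

lemma exists_nonunit_root_of_map [IsLocalRing S] (hφ : Function.Surjective φ)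
    (hker : RingHom.ker φ ≤ nilradical S) {t D : S} (ht : IsUnit t) {l' : S'}
    (hl' : ¬IsUnit l') (hroot : l' ^ 2 - φ t * l' + φ D = 0) :
    ∃ l, ¬IsUnit l ∧ l ^ 2 - t * l + D = 0 := by
  obtain ⟨l₀, rfl⟩ := hφ l'
  have hl₀ : l₀ ∈ maximalIdeal S := fun h => hl' (h.map φ)
  let P : S[X] := X ^ 2 - C t * X + C D
  have hP (x : S) : aeval x P = x ^ 2 - t * x + D := by simp [P]
  have hP' : aeval l₀ (derivative P) = -(t - 2 * l₀) := by simp [P]; ring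
  have hsimple : IsUnit (aeval l₀ (derivative P)) := by
    rw [hP', sub_eq_add_neg]
    exact (isUnit_add_of_mem_maximalIdeal ht (neg_mem (Ideal.mul_mem_left _ _ hl₀))).neg
  have happrox : IsNilpotent (aeval l₀ P) := hker (by simpa [hP] using hroot)
  obtain ⟨r, ⟨hnil, hr⟩, -⟩ := existsUnique_nilpotent_sub_and_aeval_eq_zero happrox hsimple
  refine ⟨r, fun hu => ?_, by rwa [hP] at hr⟩
  have hsub : l₀ - r ∈ maximalIdeal S := nilradical_le_prime _ (mem_nilradical.mpr hnil)
  exact notMem_maximalIdeal.mpr hu (by simpa using sub_mem hl₀ hsub)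

end NilKernel

namespace GenMatrix

section Ring

variable {R : Type*} [Ring R] {s : R} (A B : GenMatrix R s)

@[simp] lemma sub_a : (A - B).a = A.a - B.a := by simp [sub_eq_add_neg]
@[simp] lemma sub_b : (A - B).b = A.b - B.b := by simp [sub_eq_add_neg]
@[simp] lemma sub_c : (A - B).c = A.c - B.c := by simp [sub_eq_add_neg]
@[simp] lemma sub_d : (A - B).d = A.d - B.d := by simp [sub_eq_add_neg]

end Ring

section CommRing

variable {S : Type*} [CommRing S] {s : S}

@[simps]
def scalar (x : S) : GenMatrix S s := ⟨x, 0, 0, x⟩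

@[simp] lemma scalar_zero : (scalar 0 : GenMatrix S s) = 0 := by
  ext <;> simp

lemma commute_scalar (x : S) (A : GenMatrix S s) : Commute (scalar x) A := by
  ext <;> simp only [mul_a, mul_b, mul_c, mul_d, scalar_a, scalar_b, scalar_c, scalar_d] <;> ring

lemma tr_sub (A B : GenMatrix S s) : (A - B).tr = A.tr - B.tr := by
  simp only [tr, sub_a, sub_d]; ring

lemma tr_scalar_mul (x : S) (A : GenMatrix S s) : (scalar x * A).tr = x * A.tr := by
  simp only [tr, mul_a, mul_d, scalar_a, scalar_b, scalar_c, scalar_d]; ring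

lemma dets_mul (A B : GenMatrix S s) : (A * B).dets = A.dets * B.dets := by
  simp only [dets, mul_a, mul_b, mul_c, mul_d]; ring

lemma dets_one_add (A : GenMatrix S s) : (1 + A).dets = 1 + A.tr + A.dets := by
  simp only [dets, tr, add_a, add_b, add_c, add_d, one_a, one_b, one_c, one_d]; ring

lemma cayley_hamilton (A : GenMatrix S s) : A * A = scalar A.tr * A - scalar A.dets := by
  ext <;> simp only [tr, dets, mul_a, mul_b, mul_c, mul_d, sub_a, sub_b, sub_c, sub_d, scalar_a,
    scalar_b, scalar_c, scalar_d] <;> ring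

lemma tr_mul_self (A : GenMatrix S s) : (A * A).tr = A.tr ^ 2 - 2 * A.dets := by
  simp only [tr, dets, mul_a, mul_d]; ring

lemma isUnit_iff_isUnit_dets {A : GenMatrix S s} : IsUnit A ↔ IsUnit A.dets := by
  constructor
  · rintro ⟨u, rfl⟩
    have h := congrArg dets u.mul_inv
    rw [dets_mul] at h
    exact .of_mul_eq_one _ (h.trans (by simp [dets]))
  · intro h
    obtain ⟨v, hv⟩ := h.exists_right_inv
    have hv : (A.a * A.d - s * (A.b * A.c)) * v = 1 := hv
    refine ⟨⟨A, ⟨v * A.d, -(v * A.b), -(v * A.c), v * A.a⟩, ?_, ?_⟩, rfl⟩ <;>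
      ext <;> simp only [mul_a, mul_b, mul_c, mul_d, one_a, one_b, one_c, one_d] <;>
        first | ring1 | linear_combination hv

lemma isUnit_dets_of_isQuasinilpotent {A : GenMatrix S s} (hA : IsQuasinilpotent A)
    (htr : IsUnit A.tr) : IsUnit A.dets := by
  obtain ⟨w, hw⟩ := htr.exists_right_inv
  have h := isUnit_iff_isUnit_dets.mp (hA (scalar (-w)) (commute_scalar (-w) A).symm)
  have hdet : (1 + A * scalar (-w)).dets = A.dets * w ^ 2 := by
    simp only [tr] at hw
    simp [dets]
    linear_combination -hw
  rw [hdet] at h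
  exact isUnit_of_mul_isUnit_left h

lemma isQuasipolar_of_isUnit_dets {A : GenMatrix S s} (h : IsUnit A.dets) : IsQuasipolar A :=
  ⟨0, .zero, fun y _ => by rw [zero_mul, mul_zero], by rwa [add_zero, isUnit_iff_isUnit_dets],
    fun x _ => by simp⟩

lemma tr_mul_mem_of_commute (P : Ideal S) [P.IsPrime] {Z X : GenMatrix S s} (htr : Z.tr ∈ P)
    (hdet : Z.dets ∈ P) (hZX : Z * X = X * Z) : (Z * X).tr ∈ P := by
  have hsq : Z * X * (Z * X) = scalar Z.tr * (Z * (X * X)) - scalar Z.dets * (X * X) := by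
    rw [Commute.mul_mul_mul_comm hZX.symm, cayley_hamilton, sub_mul, mul_assoc]
  have h := tr_mul_self (Z * X)
  rw [hsq, tr_sub, tr_scalar_mul, tr_scalar_mul, dets_mul] at h
  have hpow : (Z * X).tr ^ 2 =
      Z.tr * (Z * (X * X)).tr - Z.dets * (X * X).tr + 2 * (Z.dets * X.dets) := by
    linear_combination -h
  refine Ideal.IsPrime.mem_of_pow_mem ‹_› 2 ?_
  rw [hpow]
  exact P.add_mem (P.sub_mem (P.mul_mem_right _ htr) (P.mul_mem_right _ hdet))
    (P.mul_mem_left _ (P.mul_mem_right _ hdet))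

def HasNonunitEigenvalue (A : GenMatrix S s) : Prop :=
  ∃ l, ¬IsUnit l ∧ l ^ 2 - A.tr * l + A.dets = 0

end CommRing

section LocalRing

variable {S : Type*} [CommRing S] [IsLocalRing S] {s : S}

lemma isQuasinilpotent_of_tr_mem_of_dets_mem {Z : GenMatrix S s} (htr : Z.tr ∈ maximalIdeal S)
    (hdet : Z.dets ∈ maximalIdeal S) : IsQuasinilpotent Z := by
  intro X hZX
  rw [isUnit_iff_isUnit_dets, dets_one_add, add_assoc]
  refine isUnit_add_of_mem_maximalIdeal isUnit_one (add_mem ?_ ?_)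
  · exact tr_mul_mem_of_commute _ htr hdet hZX
  · exact dets_mul Z X ▸ Ideal.mul_mem_right _ _ hdet

lemma isQuasipolar_of_tr_mem_of_dets_mem {A : GenMatrix S s} (htr : A.tr ∈ maximalIdeal S)
    (hdet : A.dets ∈ maximalIdeal S) : IsQuasipolar A := by
  refine ⟨1, .one, fun y _ => by rw [one_mul, mul_one], ?_, ?_⟩
  · rw [isUnit_iff_isUnit_dets, add_comm, dets_one_add, add_assoc]
    exact isUnit_add_of_mem_maximalIdeal isUnit_one (add_mem htr hdet)
  · rw [mul_one]
    exact isQuasinilpotent_of_tr_mem_of_dets_mem htr hdet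

/-- With `l' = tr A - l` the other root, `p = (l' - A) / (l' - l)` is the spectral idempotent
of `A` for `l`, a polynomial in `A`; `A + p` has eigenvalues `l'` and `1 + l`. -/
lemma isQuasipolar_of_root_mem {A : GenMatrix S s} (htr : IsUnit A.tr) {l : S}
    (hl : l ∈ maximalIdeal S) (hroot : l ^ 2 - A.tr * l + A.dets = 0) : IsQuasipolar A := by
  have hl' : IsUnit (A.tr - l) := by
    simpa [sub_eq_add_neg] using isUnit_add_of_mem_maximalIdeal htr (neg_mem hl)
  obtain ⟨v, hv⟩ := (isUnit_add_of_mem_maximalIdeal hl' (neg_mem hl)).exists_right_inv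
  have hdet : A.dets ∈ maximalIdeal S := by
    rw [show A.dets = (A.tr - l) * l by linear_combination hroot]
    exact Ideal.mul_mem_left _ _ hl
  set p : GenMatrix S s := scalar (v * (A.tr - l)) - scalar v * A with hp
  refine ⟨p, ?_, fun y hy => ?_, ?_, ?_⟩
  · show p * p = p
    simp only [tr, dets] at hv hroot
    ext
    · simp [hp, tr]; linear_combination v * (A.d - l) * hv - v ^ 2 * hroot
    · simp [hp, tr]; linear_combination -(v * A.b) * hv
    · simp [hp, tr]; linear_combination -(v * A.c) * hv
    · simp [hp, tr]; linear_combination v * (A.a - l) * hv - v ^ 2 * hroot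
  · exact (commute_scalar _ y).sub_left ((commute_scalar v y).mul_left hy.symm)
  · have h : (A + p).dets = (A.tr - l) * (1 + l) := by
      simp only [tr, dets] at hv hroot ⊢
      simp [hp, tr]
      linear_combination (1 - v) ^ 2 * hroot + (A.a + A.d - l) * hv
    rw [isUnit_iff_isUnit_dets, h]
    exact hl'.mul (isUnit_add_of_mem_maximalIdeal isUnit_one hl)
  · have h : (A * p).tr = v * (2 * A.dets - l * A.tr) := by
      simp [hp, tr, dets]; ring
    refine isQuasinilpotent_of_tr_mem_of_dets_mem ?_ ?_
    · rw [h]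
      exact Ideal.mul_mem_left _ _
        (sub_mem (Ideal.mul_mem_left _ _ hdet) (Ideal.mul_mem_right _ _ hl))
    · rw [dets_mul]
      exact Ideal.mul_mem_right _ _ hdet

lemma eq_zero_or_eq_one_or_of_isIdempotentElem {p : GenMatrix S s} (hp : IsIdempotentElem p) :
    p = 0 ∨ p = 1 ∨ p.dets = 0 ∧ p.tr = 1 := by
  have hdet : IsIdempotentElem p.dets := by
    rw [IsIdempotentElem, ← dets_mul, hp.eq]
  rcases eq_zero_or_eq_one_of_isIdempotentElem hdet with hdet | hdet
  · have hp' : p = scalar p.tr * p := by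
      conv_lhs => rw [← hp.eq, cayley_hamilton, hdet, scalar_zero, sub_zero]
    have htr : IsIdempotentElem p.tr := by
      rw [IsIdempotentElem, ← tr_scalar_mul, ← hp']
    rcases eq_zero_or_eq_one_of_isIdempotentElem htr with htr | htr
    · left
      rw [hp', htr, scalar_zero, zero_mul]
    · exact Or.inr (Or.inr ⟨hdet, htr⟩)
  · right; left
    exact (IsIdempotentElem.iff_eq_one_of_isUnit
      (isUnit_iff_isUnit_dets.mpr (hdet ▸ isUnit_one))).mp hp

lemma hasNonunitEigenvalue_of_isQuasipolar {A : GenMatrix S s} (hA : IsQuasipolar A)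
    (htr : IsUnit A.tr) (hdet : ¬IsUnit A.dets) : A.HasNonunitEigenvalue := by
  obtain ⟨p, hp, hcomm, hunit, hnil⟩ := hA
  rcases eq_zero_or_eq_one_or_of_isIdempotentElem hp with rfl | rfl | ⟨hpdet, hptr⟩
  · rw [add_zero, isUnit_iff_isUnit_dets] at hunit
    exact absurd hunit hdet
  · rw [mul_one] at hnil
    exact absurd (isUnit_dets_of_isQuasinilpotent hnil htr) hdet
  have hApdet : (A * p).dets = 0 := by rw [dets_mul, hpdet, mul_zero]
  refine ⟨(A * p).tr, fun hu => ?_, ?_⟩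
  · have h := isUnit_dets_of_isQuasinilpotent hnil hu
    rw [hApdet] at h
    exact not_isUnit_zero h
  · have hsq : A * p * (A * p) = scalar A.tr * (A * p) - scalar A.dets * p := by
      rw [mul_assoc, ← mul_assoc p A p, hcomm A rfl, mul_assoc, hp.eq, ← mul_assoc,
        cayley_hamilton, sub_mul, mul_assoc]
    have h := tr_mul_self (A * p)
    rw [hsq, tr_sub, tr_scalar_mul, tr_scalar_mul, hptr, hApdet] at h
    linear_combination -h

theorem isQuasipolarRing_iff_forall_hasNonunitEigenvalue :
    IsQuasipolarRing (GenMatrix S s) ↔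
      ∀ A : GenMatrix S s, IsUnit A.tr → ¬IsUnit A.dets → A.HasNonunitEigenvalue := by
  refine ⟨fun h A htr hdet => hasNonunitEigenvalue_of_isQuasipolar (h A) htr hdet,
    fun h A => ?_⟩
  by_cases hdet : IsUnit A.dets
  · exact isQuasipolar_of_isUnit_dets hdet
  by_cases htr : IsUnit A.tr
  · obtain ⟨l, hl, hroot⟩ := h A htr hdet
    exact isQuasipolar_of_root_mem htr hl hroot
  · exact isQuasipolar_of_tr_mem_of_dets_mem htr hdet

theorem isQuasipolarRing_zero : IsQuasipolarRing (GenMatrix S 0) := by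
  refine isQuasipolarRing_iff_forall_hasNonunitEigenvalue.mpr fun A _ hdet => ?_
  have had : A.a * A.d ∈ maximalIdeal S := by simpa [dets] using hdet
  rcases (maximalIdeal.isMaximal S).isPrime.mem_or_mem had with h | h
  · exact ⟨A.a, h, by simp [tr, dets]; ring⟩
  · exact ⟨A.d, h, by simp [tr, dets]; ring⟩

end LocalRing

section Map

variable {S S' : Type*} [CommRing S] [CommRing S'] {s : S} (φ : S →+* S')

def map (A : GenMatrix S s) : GenMatrix S' (φ s) := ⟨φ A.a, φ A.b, φ A.c, φ A.d⟩

lemma tr_map (A : GenMatrix S s) : (A.map φ).tr = φ A.tr :=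
  (map_add φ _ _).symm

lemma dets_map (A : GenMatrix S s) : (A.map φ).dets = φ A.dets := by
  simp only [dets, map, map_sub, map_mul]

lemma map_surjective (hφ : Function.Surjective φ) :
    Function.Surjective (map φ : GenMatrix S s → GenMatrix S' (φ s)) := by
  intro A'
  obtain ⟨a, ha⟩ := hφ A'.a
  obtain ⟨b, hb⟩ := hφ A'.b
  obtain ⟨c, hc⟩ := hφ A'.c
  obtain ⟨d, hd⟩ := hφ A'.d
  exact ⟨⟨a, b, c, d⟩, by ext <;> assumption⟩

variable {φ}

lemma hasNonunitEigenvalue_map_iff [IsLocalRing S] (hφ : Function.Surjective φ)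
    (hker : RingHom.ker φ ≤ nilradical S) {A : GenMatrix S s} (htr : IsUnit A.tr) :
    (A.map φ).HasNonunitEigenvalue ↔ A.HasNonunitEigenvalue := by
  have := φ.isLocalHom_of_surjective_of_ker_le_nilradical hφ hker
  constructor
  · rintro ⟨l', hl', hroot⟩
    rw [tr_map, dets_map] at hroot
    exact exists_nonunit_root_of_map φ hφ hker htr hl' hroot
  · rintro ⟨l, hl, hroot⟩
    exact ⟨φ l, by rwa [isUnit_map_iff], by simpa [tr_map, dets_map] using congrArg φ hroot⟩

theorem isQuasipolarRing_iff_of_surjective [IsLocalRing S'] (hφ : Function.Surjective φ)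
    (hker : RingHom.ker φ ≤ nilradical S) :
    IsQuasipolarRing (GenMatrix S s) ↔ IsQuasipolarRing (GenMatrix S' (φ s)) := by
  have := φ.isLocalHom_of_surjective_of_ker_le_nilradical hφ hker
  have := φ.domain_nontrivial
  have := φ.domain_isLocalRing
  simp only [isQuasipolarRing_iff_forall_hasNonunitEigenvalue]
  constructor
  · intro h A' htr hdet
    obtain ⟨A, rfl⟩ := map_surjective φ hφ A'
    rw [tr_map, isUnit_map_iff] at htr
    rw [dets_map, isUnit_map_iff] at hdet
    exact (hasNonunitEigenvalue_map_iff hφ hker htr).mpr (h A htr hdet)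
  · intro h A htr hdet
    refine (hasNonunitEigenvalue_map_iff hφ hker htr).mp (h _ ?_ ?_)
    · rwa [tr_map, isUnit_map_iff]
    · rwa [dets_map, isUnit_map_iff]

end Map

end GenMatrix

namespace Polynomial

variable {R : Type*} [CommRing R] {n : ℕ}

noncomputable def constantCoeffQuotXPow (hn : n ≠ 0) :
    R[X] ⧸ Ideal.span {(X : R[X]) ^ n} →+* R :=
  Ideal.Quotient.lift _ constantCoeff fun f hf => by
    obtain ⟨g, rfl⟩ := Ideal.mem_span_singleton'.mp hf
    simp [hn.symm]

@[simp] lemma constantCoeffQuotXPow_mk (hn : n ≠ 0) (f : R[X]) :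
    constantCoeffQuotXPow hn (Ideal.Quotient.mk _ f) = f.coeff 0 :=
  rfl

lemma constantCoeffQuotXPow_surjective (hn : n ≠ 0) :
    Function.Surjective (constantCoeffQuotXPow (R := R) hn) :=
  fun r => ⟨Ideal.Quotient.mk _ (C r), by simp⟩

lemma ker_constantCoeffQuotXPow_le_nilradical (hn : n ≠ 0) :
    RingHom.ker (constantCoeffQuotXPow (R := R) hn) ≤ nilradical _ := by
  intro x hx
  obtain ⟨f, rfl⟩ := Ideal.Quotient.mk_surjective x
  obtain ⟨g, rfl⟩ := X_dvd_iff.mpr (by simpa using hx)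
  refine mem_nilradical.mpr ⟨n, ?_⟩
  rw [← map_pow, Ideal.Quotient.eq_zero_iff_mem, mul_pow]
  exact Ideal.mem_span_singleton.mpr (dvd_mul_right _ _)

end Polynomial

/-- for a commutative local ring `R`, `n ≥ 1` and
`s ∈ R[x]/(xⁿ)` represented by a polynomial `σ`, the ring `K_s(R[x]/(xⁿ))` is quasipolar
iff `K_{s₀}(R)` is quasipolar, where `s₀ = σ(0)`; in particular `K_{xᵐ}(R[x]/(xⁿ))` is
quasipolar for all `1 ≤ m ≤ n`. -/
theorem genMatrix_polynomialQuotient_isQuasipolarRing_iff {R : Type*} [CommRing R]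
    [IsLocalRing R] (n : ℕ) (hn : 1 ≤ n) :
    (∀ σ : Polynomial R,
      IsQuasipolarRing
        (GenMatrix (Polynomial R ⧸ Ideal.span {(Polynomial.X : Polynomial R) ^ n})
          (Ideal.Quotient.mk (Ideal.span {(Polynomial.X : Polynomial R) ^ n}) σ)) ↔
      IsQuasipolarRing (GenMatrix R (σ.coeff 0))) ∧
    (∀ m : ℕ, 1 ≤ m → m ≤ n →
      IsQuasipolarRing
        (GenMatrix (Polynomial R ⧸ Ideal.span {(Polynomial.X : Polynomial R) ^ n})
          (Ideal.Quotient.mk (Ideal.span {(Polynomial.X : Polynomial R) ^ n})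
            (Polynomial.X ^ m)))) := by
  have hn0 : n ≠ 0 := Nat.one_le_iff_ne_zero.mp hn
  have key (σ : R[X]) :
      IsQuasipolarRing
          (GenMatrix (R[X] ⧸ Ideal.span {(X : R[X]) ^ n}) (Ideal.Quotient.mk _ σ)) ↔
        IsQuasipolarRing (GenMatrix R (σ.coeff 0)) :=
    GenMatrix.isQuasipolarRing_iff_of_surjective (constantCoeffQuotXPow_surjective hn0)
      (ker_constantCoeffQuotXPow_le_nilradical hn0)
  refine ⟨key, fun m hm _ => (key _).mpr ?_⟩
  rw [coeff_X_pow, if_neg (by omega)]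
  exact GenMatrix.isQuasipolarRing_zero
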